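/- Let m and n be distinct positive integers, let s be a nonempty finite sequence of positive integers, and let k > 0. Then the map t ↦ C_{m,n}(s, t) is a bijection from {m, n}^k to {m, n}^k. -/
import Mathlib
set_option linter.unusedVariables false


/-- `expand1 m n x s` : the expansion `E_{m,n}(s, x)` of the finite sequence `s` with the
single starting point `x ∈ {m, n}`: the unique sequence with values in `{m, n}`, first term
`x`, and run-lengths `s`. -/
def expand1 (m n : ℕ) : ℕ → List ℕ → List ℕ
  | _, [] => []
  | x, a :: l => List.replicate a x ++ expand1 m n (m + n - x) l

/-- `expand m n s t` : the expansion `E_{m,n}(s, t)` of the finite sequence `s` with the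
finite sequence of starting points `t` (values in `{m, n}`), defined by
`E_{m,n}(s, t₁ t') = E_{m,n}(E_{m,n}(s, t₁), t')`. -/
def expand (m n : ℕ) : List ℕ → List ℕ → List ℕ
  | s, [] => s
  | s, x :: t => expand m n (expand1 m n x s) t

/-- `torsion m n s t` : the torsion `C_{m,n}(s, t)`, the sequence of the same length as `t`
whose `k`-th term equals `m + n` minus the last term of `E_{m,n}(s, t⁽ᵏ⁾)`, where `t⁽ᵏ⁾`
consists of the first `k` terms of `t`. -/
def torsion (m n : ℕ) (s t : List ℕ) : List ℕ :=
  (List.range t.length).map fun k => m + n - (expand m n s (t.take (k + 1))).getLastD 0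

lemma expand1_ne_nil (m n x : ℕ) (s : List ℕ) (hs : s ≠ []) (hsp : ∀ a ∈ s, 0 < a) :
    expand1 m n x s ≠ [] := by
  cases s with
  | nil => exact absurd rfl hs
  | cons a l =>
    have ha : 0 < a := hsp a (.head _)
    simp [expand1, ha.ne']

lemma expand1_mem (m n : ℕ) (s : List ℕ) : ∀ (x : ℕ), x = m ∨ x = n →
    ∀ a ∈ expand1 m n x s, a = m ∨ a = n := by
  induction s with
  | nil => intro x _ a ha; simp [expand1] at ha
  | cons b l ih =>
    intro x hx a ha
    simp only [expand1, List.mem_append, List.mem_replicate] at ha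
    rcases ha with ⟨_, rfl⟩ | ha
    · exact hx
    · exact ih (m + n - x) (by omega) a ha

lemma expand1_pos (m n : ℕ) (hm : 0 < m) (hn : 0 < n) (s : List ℕ) (x : ℕ)
    (hx : x = m ∨ x = n) : ∀ a ∈ expand1 m n x s, 0 < a := by
  intro a ha
  rcases expand1_mem m n s x hx a ha with rfl | rfl <;> assumption

lemma expand1_getLast? (m n : ℕ) (s : List ℕ) : ∀ (x : ℕ), x = m ∨ x = n → s ≠ [] →
    (∀ a ∈ s, 0 < a) →
    (expand1 m n x s).getLast? = some (if s.length % 2 = 1 then x else m + n - x) := by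
  induction s with
  | nil => intro x _ hs; exact absurd rfl hs
  | cons b l ih =>
    intro x hx _ hsp
    have hb : 0 < b := hsp b (.head _)
    cases l with
    | nil =>
      obtain ⟨c, rfl⟩ := Nat.exists_eq_add_of_lt hb
      simp [expand1, List.replicate_succ', List.getLast?_concat]
    | cons b' l' =>
      rw [expand1, List.getLast?_append, ih (m + n - x) (by omega) (by simp)
        (fun a ha => hsp a (.tail _ ha))]
      have hx2 : m + n - (m + n - x) = x := by omega
      simp only [Option.or, hx2, List.length_cons]
      by_cases hp : (l'.length + 1) % 2 = 1
      · have h2 : ¬ (l'.length + 1 + 1) % 2 = 1 := by omega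
        simp [hp, h2]
      · have h2 : (l'.length + 1 + 1) % 2 = 1 := by omega
        simp [hp, h2]

lemma expand1_getLastD (m n x : ℕ) (s : List ℕ) (hx : x = m ∨ x = n) (hs : s ≠ [])
    (hsp : ∀ a ∈ s, 0 < a) :
    (expand1 m n x s).getLastD 0 = if s.length % 2 = 1 then x else m + n - x := by
  rw [List.getLastD_eq_getLast?, expand1_getLast? m n s x hx hs hsp, Option.getD_some]

lemma torsion_cons (m n : ℕ) (s : List ℕ) (x : ℕ) (t : List ℕ) :
    torsion m n s (x :: t) =
      (m + n - (expand1 m n x s).getLastD 0) :: torsion m n (expand1 m n x s) t := by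
  simp only [torsion, List.length_cons, List.range_succ_eq_map, List.map_cons, List.map_map]
  congr 1

lemma torsion_length (m n : ℕ) (s t : List ℕ) : (torsion m n s t).length = t.length := by
  simp [torsion]

lemma torsion_mem (m n : ℕ) (hm : 0 < m) (hn : 0 < n) :
    ∀ (t s : List ℕ), s ≠ [] → (∀ a ∈ s, 0 < a) → (∀ a ∈ t, a = m ∨ a = n) →
      ∀ a ∈ torsion m n s t, a = m ∨ a = n := by
  intro t
  induction t with
  | nil => intro s _ _ _ a ha; simp [torsion] at ha
  | cons x t ih =>
    intro s hs hsp ht a ha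
    have hx : x = m ∨ x = n := ht x (.head _)
    rw [torsion_cons] at ha
    rcases List.mem_cons.mp ha with rfl | ha
    · rw [expand1_getLastD m n x s hx hs hsp]
      rcases hx with rfl | rfl <;> split <;> omega
    · exact ih (expand1 m n x s) (expand1_ne_nil m n x s hs hsp)
        (expand1_pos m n hm hn s x hx) (fun a ha => ht a (.tail _ ha)) a ha

lemma torsion_injOn (m n : ℕ) (hm : 0 < m) (hn : 0 < n) (hmn : m ≠ n) :
    ∀ (t t' s : List ℕ), s ≠ [] → (∀ a ∈ s, 0 < a) → t.length = t'.length →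
      (∀ a ∈ t, a = m ∨ a = n) → (∀ a ∈ t', a = m ∨ a = n) →
      torsion m n s t = torsion m n s t' → t = t' := by
  intro t
  induction t with
  | nil =>
    intro t' s _ _ hlen _ _ _
    exact (List.length_eq_zero_iff.mp hlen.symm).symm
  | cons x t ih =>
    intro t' s hs hsp hlen ht ht' heq
    cases t' with
    | nil => simp at hlen
    | cons x' t' =>
      have hx : x = m ∨ x = n := ht x (.head _)
      have hx' : x' = m ∨ x' = n := ht' x' (.head _)
      rw [torsion_cons, torsion_cons] at heq
      injection heq with hhead htail
      rw [expand1_getLastD m n x s hx hs hsp, expand1_getLastD m n x' s hx' hs hsp] at hhead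
      have hxx : x = x' := by
        rcases hx with rfl | rfl <;> rcases hx' with rfl | rfl <;>
          (try rfl) <;> split at hhead <;> omega
      subst hxx
      have := ih t' (expand1 m n x s) (expand1_ne_nil m n x s hs hsp)
        (expand1_pos m n hm hn s x hx) (by simpa using hlen)
        (fun a ha => ht a (.tail _ ha)) (fun a ha => ht' a (.tail _ ha)) htail
      rw [this]

lemma torsion_surj (m n : ℕ) (hm : 0 < m) (hn : 0 < n) :
    ∀ (c s : List ℕ), s ≠ [] → (∀ a ∈ s, 0 < a) → (∀ a ∈ c, a = m ∨ a = n) →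
      ∃ t, t.length = c.length ∧ (∀ a ∈ t, a = m ∨ a = n) ∧ torsion m n s t = c := by
  intro c
  induction c with
  | nil => exact fun s _ _ _ => ⟨[], rfl, by simp, by simp [torsion]⟩
  | cons b c ih =>
    intro s hs hsp hc
    have hb : b = m ∨ b = n := hc b (.head _)
    set x : ℕ := if s.length % 2 = 1 then m + n - b else b with hxdef
    have hx : x = m ∨ x = n := by rw [hxdef]; split <;> omega
    obtain ⟨t, hlen, hmem, heq⟩ := ih (expand1 m n x s) (expand1_ne_nil m n x s hs hsp)
      (expand1_pos m n hm hn s x hx) (fun a ha => hc a (.tail _ ha))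
    refine ⟨x :: t, by simp [hlen], ?_, ?_⟩
    · intro a ha
      rcases List.mem_cons.mp ha with rfl | ha
      · exact hx
      · exact hmem a ha
    · rw [torsion_cons, heq, expand1_getLastD m n x s hx hs hsp]
      have : m + n - (if s.length % 2 = 1 then x else m + n - x) = b := by
        rw [hxdef]
        rcases hb with rfl | rfl <;> by_cases hp : s.length % 2 = 1 <;> simp [hp]
      rw [this]

/-- The map `t ↦ C_{m,n}(s, t)` is a bijection from `{m, n}^k` to `{m, n}^k`. -/
theorem torsion_bijOn (m n : ℕ) (hm : 0 < m) (hn : 0 < n) (hmn : m ≠ n)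
    (s : List ℕ) (hs : s ≠ []) (hsp : ∀ a ∈ s, 0 < a) (k : ℕ) (hk : 0 < k) :
    Set.BijOn (torsion m n s)
      {t : List ℕ | t.length = k ∧ ∀ a ∈ t, a = m ∨ a = n}
      {t : List ℕ | t.length = k ∧ ∀ a ∈ t, a = m ∨ a = n} := by
  refine ⟨fun t ht => ⟨(torsion_length m n s t).trans ht.1,
      torsion_mem m n hm hn t s hs hsp ht.2⟩,
    fun t ht t' ht' h =>
      torsion_injOn m n hm hn hmn t t' s hs hsp (ht.1.trans ht'.1.symm) ht.2 ht'.2 h,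
    fun c hc => ?_⟩
  obtain ⟨t, hlen, hmem, heq⟩ := torsion_surj m n hm hn c s hs hsp hc.2
  exact ⟨t, ⟨hlen.trans hc.1, hmem⟩, heq⟩
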